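/- arXiv:2505.22958 — 7 statements merged into one kernel-verified Lean document; each statement's English description precedes it below -/
import Mathlib

section
/- Let φ : [n] → [ℓ] be a strictly increasing map and u ∈ {0,…,ℓ+1}. For 1 ≤ i < j ≤ ℓ+1, the pair (i,j) is d_u∘φ-degenerate if and only if (i,j) is u-exceptional or (s_u(i), s_u(j)) is φ-degenerate. -/
/-- The simplicial coface map `d_u`, skipping the value `u`. -/
def cofaceN (u p : ℕ) : ℕ := if p < u then p else p + 1

/-- The simplicial codegeneracy map `s_u`, identifying `u` and `u+1`. -/
def codegN (u x : ℕ) : ℕ := if x ≤ u then x else x - 1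

/-- For a strictly increasing `ψ : [n] → [ℓ]`, a pair `i < j` is `ψ`-degenerate if
it is left-extreme (`i ≤ ψ 0`), right-extreme (`j > ψ n`), or collapsed
(`{i,…,j−1}` is disjoint from the image of `ψ`). -/
def IsDegenerate (n : ℕ) (ψ : ℕ → ℕ) (i j : ℕ) : Prop :=
  i ≤ ψ 0 ∨ ψ n < j ∨ (∀ k, i ≤ k → k < j → ∀ y ≤ n, ψ y ≠ k)

/-- A pair `1 ≤ i < j ≤ ℓ+1` is `u`-exceptional (for `u ∈ [ℓ+1]`). -/
def IsExceptional (ℓ u i j : ℕ) : Prop :=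
  (0 < u ∧ u < ℓ + 1 ∧ i = u ∧ j = u + 1) ∨ (u = 0 ∧ i = 1) ∨ (u = ℓ + 1 ∧ j = ℓ + 1)

private lemma collapsed_iff (n : ℕ) (ψ : ℕ → ℕ) (a b : ℕ) :
    (∀ k, a ≤ k → k < b → ∀ y ≤ n, ψ y ≠ k) ↔ (∀ y ≤ n, ψ y < a ∨ b ≤ ψ y) := by
  constructor
  · intro h y hy
    rcases lt_or_ge (ψ y) a with h1 | h1
    · exact Or.inl h1
    · rcases lt_or_ge (ψ y) b with h2 | h2
      · exact absurd rfl (h (ψ y) h1 h2 y hy)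
      · exact Or.inr h2
  · intro h k hk1 hk2 y hy heq
    rcases h y hy with h' | h' <;> omega

/-- `(i,j)` is `d_u ∘ φ`-degenerate iff it is `u`-exceptional or `(s_u i, s_u j)` is
`φ`-degenerate. -/
theorem degenerate_coface_iff (n ℓ : ℕ) (φ : ℕ → ℕ)
    (hmono : StrictMonoOn φ (Set.Iic n)) (hrange : ∀ y ≤ n, φ y ≤ ℓ)
    (u : ℕ) (hu : u ≤ ℓ + 1)
    (i j : ℕ) (hi : 1 ≤ i) (hij : i < j) (hj : j ≤ ℓ + 1) :
    IsDegenerate n (fun y => cofaceN u (φ y)) i j ↔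
      IsExceptional ℓ u i j ∨ IsDegenerate n φ (codegN u i) (codegN u j) := by
  have B1 : ∀ p, (i ≤ cofaceN u p) ↔ (codegN u i ≤ p) := by
    intro p; unfold cofaceN codegN; split_ifs <;> omega
  have B2 : ∀ p, (cofaceN u p < j) ↔ (p < codegN u j) := by
    intro p; unfold cofaceN codegN; split_ifs <;> omega
  have B3 : ∀ p, (cofaceN u p < i ∨ j ≤ cofaceN u p) ↔
      (p < codegN u i ∨ codegN u j ≤ p) := by
    intro p; unfold cofaceN codegN; split_ifs <;> omega
  have hmain : IsDegenerate n (fun y => cofaceN u (φ y)) i j ↔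
      IsDegenerate n φ (codegN u i) (codegN u j) := by
    unfold IsDegenerate
    rw [collapsed_iff, collapsed_iff]
    constructor
    · rintro (h | h | h)
      · exact Or.inl ((B1 (φ 0)).mp h)
      · exact Or.inr (Or.inl ((B2 (φ n)).mp h))
      · exact Or.inr (Or.inr (fun y hy => (B3 (φ y)).mp (h y hy)))
    · rintro (h | h | h)
      · exact Or.inl ((B1 (φ 0)).mpr h)
      · exact Or.inr (Or.inl ((B2 (φ n)).mpr h))
      · exact Or.inr (Or.inr (fun y hy => (B3 (φ y)).mpr (h y hy)))
  have hexc : IsExceptional ℓ u i j → IsDegenerate n φ (codegN u i) (codegN u j) := by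
    rintro (⟨h1, h2, h3, h4⟩ | ⟨h1, h2⟩ | ⟨h1, h2⟩)
    · refine Or.inr (Or.inr (fun k hk1 hk2 y hy heq => ?_))
      unfold codegN at hk1 hk2; split_ifs at hk1 hk2 <;> omega
    · refine Or.inl ?_
      unfold codegN; split_ifs <;> omega
    · refine Or.inr (Or.inl ?_)
      have := hrange n le_rfl
      unfold codegN; split_ifs <;> omega
  rw [hmain]
  constructor
  · exact Or.inr
  · rintro (h | h)
    · exact hexc h
    · exact h
end

section
/- For every strictly increasing map ψ : [n] → [ℓ] and Fox-Neuwirth tree Λ ∈ FN_m(n), the twisted morphism ψ^Λ : [n] → [ℓ] defined by ψ^Λ(0) = ψ(0) and ψ^Λ(s) = (σ^{ψΛ})⁻¹(ψ(σ^Λ(s))) for s ≥ 1 is strictly increasing. -/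
/-- The data of a Fox–Neuwirth tree: a label permutation `perm` of `{1,…,n}`
(with inverse `inv`) and depth indices `depth k` (for `1 ≤ k ≤ n−1`). -/
structure PreTree where
  perm : ℕ → ℕ
  inv : ℕ → ℕ
  depth : ℕ → ℕ

/-- Well-formedness: `Λ` is a Fox–Neuwirth tree of height `m` on `n` leaves, i.e.
`perm` is a permutation of `{1,…,n}` with two-sided inverse `inv`, and the depth
indices lie in `{0,…,m−1}`. -/
def PreTree.Wf (m n : ℕ) (Λ : PreTree) : Prop :=
  (∀ k, 1 ≤ k → k ≤ n →
    1 ≤ Λ.perm k ∧ Λ.perm k ≤ n ∧ Λ.inv (Λ.perm k) = k ∧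
    1 ≤ Λ.inv k ∧ Λ.inv k ≤ n ∧ Λ.perm (Λ.inv k) = k) ∧
  (∀ k, 1 ≤ k → k + 1 ≤ n → Λ.depth k < m)

/-- The cosimplicial coface action `d_i : FN_m(n) → FN_m(n+1)` on Fox–Neuwirth trees:
`d_0` inserts a new leftmost leaf labeled `1` joined at depth `m−1`; `d_{n+1}` inserts
a new rightmost leaf labeled `n+1` joined at depth `m−1`; an internal `d_i`
(`0 < i < n+1`) doubles the leaf labeled `i`, inserting `i+1` immediately to its right
at depth `m−1` and relabeling larger labels. -/
def coface (m n i : ℕ) (Λ : PreTree) : PreTree :=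
  if i = 0 then
    { perm := fun k => if k = 1 then 1 else Λ.perm (k - 1) + 1
      inv := fun t => if t = 1 then 1 else Λ.inv (t - 1) + 1
      depth := fun k => if k = 1 then m - 1 else Λ.depth (k - 1) }
  else if i = n + 1 then
    { perm := fun k => if k = n + 1 then n + 1 else Λ.perm k
      inv := fun t => if t = n + 1 then n + 1 else Λ.inv t
      depth := fun k => if k = n then m - 1 else Λ.depth k }
  else
    { perm := fun k => if k = Λ.inv i then i else cofaceN i (Λ.perm (codegN (Λ.inv i) k))
      inv := fun t => if t = i then Λ.inv i else cofaceN (Λ.inv i) (Λ.inv (codegN i t))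
      depth := fun k => if k = Λ.inv i then m - 1 else Λ.depth (codegN (Λ.inv i) k) }

/-- `Transforms m n ℓ ψ Λ Γ` : the strictly increasing map `ψ : [n] → [ℓ]` is realized
as a composition of cofaces, and `Γ = ψΛ` is the Fox–Neuwirth tree obtained by applying
the corresponding cofaces to `Λ`. -/
inductive Transforms (m : ℕ) : ℕ → ℕ → (ℕ → ℕ) → PreTree → PreTree → Prop
  | refl (n : ℕ) (Λ : PreTree) : Transforms m n n id Λ Λ
  | step {n ℓ : ℕ} {ψ : ℕ → ℕ} {Λ Γ : PreTree} (k : ℕ) (hk : k ≤ ℓ + 1)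
      (h : Transforms m n ℓ ψ Λ Γ) :
      Transforms m n (ℓ + 1) (fun t => cofaceN k (ψ t)) Λ (coface m ℓ k Γ)

/-- The morphism `ψ` twisted by `Λ`: `ψ^Λ(0) = ψ(0)` and
`ψ^Λ(s) = (σ^{ψΛ})⁻¹(ψ(σ^Λ(s)))` for `s ≥ 1`, where `Γ = ψΛ`. -/
def twisted (ψ : ℕ → ℕ) (Λ Γ : PreTree) : ℕ → ℕ :=
  fun s => if s = 0 then ψ 0 else Γ.inv (ψ (Λ.perm s))

/-!
The first `ψ 0` positions of `ψΛ` carry exactly the labels `1, …, ψ 0`: this holds for `Λ`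
itself with `ψ = id`, and each coface either inserts a new leaf inside that block or keeps it
untouched. Hence `ψ^Λ(0) = ψ 0` lies below every `ψ^Λ(s)` with `s ≥ 1`. On the remaining leaves,
every coface moves the old leaves by a strictly increasing relabeling of positions, so
`s ↦ (σ^{ψΛ})⁻¹ (ψ (σ^Λ s))` is a strictly increasing function of `(σ^Λ)⁻¹ (σ^Λ s) = s`.
-/

section Simplicial

variable {u v : ℕ}

theorem cofaceN_strictMono (u : ℕ) : StrictMono (cofaceN u) := by
  intro a b hab
  simp only [cofaceN]
  split_ifs <;> omega

theorem cofaceN_le_add_one (u p : ℕ) : cofaceN u p ≤ p + 1 := by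
  simp only [cofaceN]
  split_ifs <;> omega

theorem cofaceN_ne (u t : ℕ) : cofaceN u t ≠ u := by
  simp only [cofaceN]
  split_ifs <;> omega

theorem codegN_cofaceN (u t : ℕ) : codegN u (cofaceN u t) = t := by
  simp only [cofaceN, codegN]
  split_ifs <;> omega

theorem cofaceN_codegN {x : ℕ} (h : x ≠ u) : cofaceN u (codegN u x) = x := by
  simp only [cofaceN, codegN]
  split_ifs <;> omega

theorem cofaceN_eq_cofaceN {p : ℕ} (h : u ≤ p ↔ v ≤ p) : cofaceN u p = cofaceN v p := by
  simp only [cofaceN]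
  split_ifs <;> omega

end Simplicial

section Coface

variable (m ℓ : ℕ) (Γ : PreTree)

theorem coface_zero_inv (x : ℕ) :
    (coface m ℓ 0 Γ).inv x = if x = 1 then 1 else Γ.inv (x - 1) + 1 := by
  simp [coface]

theorem coface_top_inv (x : ℕ) :
    (coface m ℓ (ℓ + 1) Γ).inv x = if x = ℓ + 1 then ℓ + 1 else Γ.inv x := by
  simp [coface]

theorem coface_inv_of_ne {k : ℕ} (h₀ : k ≠ 0) (hℓ : k ≠ ℓ + 1) (x : ℕ) :
    (coface m ℓ k Γ).inv x =
      if x = k then Γ.inv k else cofaceN (Γ.inv k) (Γ.inv (codegN k x)) := by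
  simp [coface, h₀, hℓ]

theorem exists_strictMono_coface_inv_cofaceN (k : ℕ) :
    ∃ f : ℕ → ℕ, StrictMono f ∧
      ∀ t, 1 ≤ t → t ≤ ℓ → (coface m ℓ k Γ).inv (cofaceN k t) = f (Γ.inv t) := by
  rcases eq_or_ne k 0 with rfl | h₀
  · refine ⟨(· + 1), fun _ _ h => Nat.succ_lt_succ h, fun t ht _ => ?_⟩
    simp [coface_zero_inv, cofaceN, show t ≠ 0 by omega]
  rcases eq_or_ne k (ℓ + 1) with rfl | hℓ
  · refine ⟨id, strictMono_id, fun t _ ht => ?_⟩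
    simp [coface_top_inv, cofaceN, show t < ℓ + 1 by omega, show t ≠ ℓ + 1 by omega]
  · refine ⟨cofaceN (Γ.inv k), cofaceN_strictMono _, fun t _ _ => ?_⟩
    rw [coface_inv_of_ne m ℓ Γ h₀ hℓ, if_neg (cofaceN_ne k t), codegN_cofaceN]

theorem coface_inv_le_iff {k p : ℕ} (hk : k ≤ ℓ + 1) (hp : p ≤ ℓ)
    (hΓ : ∀ x, 1 ≤ x → x ≤ ℓ → (Γ.inv x ≤ p ↔ x ≤ p)) :
    ∀ x, 1 ≤ x → x ≤ ℓ + 1 →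
      ((coface m ℓ k Γ).inv x ≤ cofaceN k p ↔ x ≤ cofaceN k p) := by
  intro x hx₁ hxℓ
  rcases eq_or_ne k 0 with rfl | h₀
  · have hΓ' := hΓ (x - 1)
    simp only [coface_zero_inv, cofaceN, Nat.not_lt_zero, if_false]
    split_ifs <;> omega
  rcases eq_or_ne k (ℓ + 1) with rfl | hℓ
  · have hΓ' := hΓ x
    simp only [coface_top_inv, cofaceN, show p < ℓ + 1 by omega, if_true]
    split_ifs <;> omega
  have hkp : k ≤ p ↔ Γ.inv k ≤ p := (hΓ k (by omega) (by omega)).symm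
  rw [coface_inv_of_ne m ℓ Γ h₀ hℓ]
  split_ifs with hxk
  · subst hxk
    simp only [cofaceN]
    split_ifs <;> omega
  · -- `d_k p = d_{Γ.inv k} p` because `k` and its position lie on the same side of `p`
    obtain ⟨t, rfl⟩ : ∃ t, cofaceN k t = x := ⟨codegN k x, cofaceN_codegN hxk⟩
    have ht : 1 ≤ t ∧ t ≤ ℓ := by
      simp only [cofaceN] at hx₁ hxℓ
      split_ifs at hx₁ hxℓ <;> omega
    rw [codegN_cofaceN, (cofaceN_strictMono k).le_iff_le, ← hΓ t ht.1 ht.2,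
      cofaceN_eq_cofaceN hkp, (cofaceN_strictMono _).le_iff_le]

end Coface

namespace Transforms

variable {m n ℓ : ℕ} {ψ : ℕ → ℕ} {Λ Γ : PreTree}

theorem strictMono (h : Transforms m n ℓ ψ Λ Γ) : StrictMono ψ := by
  induction h with
  | refl => exact strictMono_id
  | step k _ _ ih => exact (cofaceN_strictMono k).comp ih

theorem map_le (h : Transforms m n ℓ ψ Λ Γ) : ψ n ≤ ℓ := by
  induction h with
  | refl => rfl
  | step k _ _ ih => exact (cofaceN_le_add_one k _).trans (Nat.succ_le_succ ih)

theorem one_le_map_le (h : Transforms m n ℓ ψ Λ Γ) {t : ℕ} (ht₁ : 1 ≤ t) (htn : t ≤ n) :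
    1 ≤ ψ t ∧ ψ t ≤ ℓ :=
  ⟨ht₁.trans (h.strictMono.id_le t), (h.strictMono.monotone htn).trans h.map_le⟩

theorem exists_strictMono_inv_map (h : Transforms m n ℓ ψ Λ Γ) :
    ∃ g : ℕ → ℕ, StrictMono g ∧ ∀ t, 1 ≤ t → t ≤ n → Γ.inv (ψ t) = g (Λ.inv t) := by
  induction h with
  | refl => exact ⟨id, strictMono_id, fun _ _ _ => rfl⟩
  | @step ℓ ψ Λ Γ k _ h ih =>
    obtain ⟨g, hg, hΓ⟩ := ih
    obtain ⟨f, hf, hcoface⟩ := exists_strictMono_coface_inv_cofaceN m ℓ Γ k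
    refine ⟨f ∘ g, hf.comp hg, fun t ht₁ htn => ?_⟩
    obtain ⟨hψ₁, hψℓ⟩ := h.one_le_map_le ht₁ htn
    rw [hcoface _ hψ₁ hψℓ, hΓ t ht₁ htn, Function.comp_apply]

theorem inv_le_iff (hΛ : Λ.Wf m n) (h : Transforms m n ℓ ψ Λ Γ) :
    ∀ x, 1 ≤ x → x ≤ ℓ → (Γ.inv x ≤ ψ 0 ↔ x ≤ ψ 0) := by
  induction h with
  | refl =>
    intro x hx₁ hxn
    have := (hΛ.1 x hx₁ hxn).2.2.2.1
    simp only [id_eq]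
    omega
  | @step ℓ ψ Λ Γ k hk h ih =>
    have hψ₀ : ψ 0 ≤ ℓ := (h.strictMono.monotone (Nat.zero_le n)).trans h.map_le
    exact coface_inv_le_iff m ℓ Γ hk hψ₀ (ih hΛ)

end Transforms

/-- The twisted morphism `ψ^Λ : [n] → [ℓ]` is strictly increasing. -/
theorem twisted_strictMonoOn (m n ℓ : ℕ) (ψ : ℕ → ℕ) (Λ Γ : PreTree)
    (hΛ : Λ.Wf m n) (h : Transforms m n ℓ ψ Λ Γ) :
    StrictMonoOn (twisted ψ Λ Γ) (Set.Iic n) := by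
  obtain ⟨g, hg, hΓ⟩ := h.exists_strictMono_inv_map
  have twisted_pos : ∀ s, 1 ≤ s → s ≤ n → twisted ψ Λ Γ s = g s := by
    intro s hs₁ hsn
    obtain ⟨hperm₁, hpermn, hinv, -⟩ := hΛ.1 s hs₁ hsn
    simp only [twisted, if_neg (show s ≠ 0 by omega), hΓ _ hperm₁ hpermn, hinv]
  intro a ha b hb hab
  have hb₁ : 1 ≤ b := by omega
  rcases Nat.eq_zero_or_pos a with rfl | ha₁
  · obtain ⟨hperm₁, hpermn, -⟩ := hΛ.1 b hb₁ hb
    obtain ⟨hψ₁, hψℓ⟩ := h.one_le_map_le hperm₁ hpermn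
    have hψ₀ : ψ 0 < ψ (Λ.perm b) := h.strictMono (by omega)
    have hlt : ψ 0 < Γ.inv (ψ (Λ.perm b)) :=
      not_le.mp ((h.inv_le_iff hΛ _ hψ₁ hψℓ).not.mpr hψ₀.not_ge)
    simpa [twisted, show b ≠ 0 by omega] using hlt
  · rw [twisted_pos a ha₁ (hab.le.trans hb), twisted_pos b hb₁ hb]
    exact hg hab
end

section
/- For a Fox-Neuwirth tree Λ ∈ FN_m(n) and an internal coface d_i : [n] → [n+1] with 0 < i < n+1, the twisted morphism satisfies d_i^Λ = d_α where α = (σ^Λ)⁻¹(i). For extremal cofaces i = 0 and i = n+1, the twisted morphism satisfies d_0^Λ = d_0 and d_{n+1}^Λ = d_{n+1}. -/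
/-- Twisted cofaces: for internal `0 < i < n+1`, `d_i^Λ = d_α` with `α = (σ^Λ)⁻¹(i)`;
for the extremal cofaces, `d_0^Λ = d_0` and `d_{n+1}^Λ = d_{n+1}`. -/
theorem twisted_coface (m n : ℕ) (Λ : PreTree) (hΛ : Λ.Wf m n) :
    (∀ i, 0 < i → i < n + 1 → ∀ s ≤ n,
      twisted (cofaceN i) Λ (coface m n i Λ) s = cofaceN (Λ.inv i) s) ∧
    (∀ s ≤ n, twisted (cofaceN 0) Λ (coface m n 0 Λ) s = cofaceN 0 s) ∧
    (∀ s ≤ n, twisted (cofaceN (n + 1)) Λ (coface m n (n + 1) Λ) s = cofaceN (n + 1) s) := by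
  obtain ⟨hperm, _⟩ := hΛ
  refine ⟨?_, ?_, ?_⟩
  · intro i hi0 hin s hs
    obtain ⟨-, -, -, hα1, hαn, hpi⟩ := hperm i hi0 (Nat.lt_succ_iff.mp hin)
    rcases Nat.eq_zero_or_pos s with rfl | hs1
    · have hα0 : 0 < Λ.inv i := hα1
      simp [twisted, cofaceN, hi0, hα0]
    · have hs0 : s ≠ 0 := by omega
      obtain ⟨hp1, hpn, hip, -, -, -⟩ := hperm s hs1 hs
      simp only [twisted, if_neg hs0, coface, if_neg (by omega : i ≠ 0),
        if_neg (by omega : i ≠ n + 1)]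
      by_cases hlt : Λ.perm s < i
      · rw [show cofaceN i (Λ.perm s) = Λ.perm s from if_pos hlt,
          if_neg (Nat.ne_of_lt hlt),
          show codegN i (Λ.perm s) = Λ.perm s from if_pos (Nat.le_of_lt hlt), hip]
      · rw [show cofaceN i (Λ.perm s) = Λ.perm s + 1 from if_neg hlt,
          if_neg (by omega : Λ.perm s + 1 ≠ i),
          show codegN i (Λ.perm s + 1) = Λ.perm s from by
            simp only [codegN, if_neg (by omega : ¬ Λ.perm s + 1 ≤ i)]; omega, hip]
  · intro s hs
    rcases Nat.eq_zero_or_pos s with rfl | hs1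
    · simp [twisted, cofaceN]
    · have hs0 : s ≠ 0 := by omega
      obtain ⟨hp1, hpn, hip, -, -, -⟩ := hperm s hs1 hs
      simp only [twisted, if_neg hs0, coface, reduceIte]
      rw [show cofaceN 0 (Λ.perm s) = Λ.perm s + 1 from if_neg (by omega)]
      simp only [if_neg (by omega : Λ.perm s + 1 ≠ 1), Nat.add_sub_cancel, hip]
      unfold cofaceN
      rw [if_neg (by omega)]
  · intro s hs
    rcases Nat.eq_zero_or_pos s with rfl | hs1
    · simp [twisted, cofaceN]
    · have hs0 : s ≠ 0 := by omega
      obtain ⟨hp1, hpn, hip, -, -, -⟩ := hperm s hs1 hs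
      simp only [twisted, if_neg hs0, coface, if_neg (by omega : n + 1 ≠ 0), reduceIte]
      rw [show cofaceN (n + 1) (Λ.perm s) = Λ.perm s from if_pos (by omega)]
      simp only [if_neg (by omega : Λ.perm s ≠ n + 1), hip]
      unfold cofaceN
      rw [if_pos (by omega)]
end

section
/- Correspondence of jumps under twisting: let ψ : [n] → [ℓ] be strictly increasing, Λ ∈ FN_m(n), and α, β ∈ {1,…,ℓ} with a = (σ^{ψΛ})⁻¹(α), b = (σ^{ψΛ})⁻¹(β). Then [ψ(0) < α < β ≤ ψ(n) and {α,…,β−1} ⊆ (im ψ)ᶜ] holds if and only if [ψ^Λ(0) < a < b ≤ ψ^Λ(n) and {a,…,b−1} ⊆ (im ψ^Λ)ᶜ] holds. -/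
/-- Jump predicate. -/
def Jmp (f : ℕ → ℕ) (n x y : ℕ) : Prop :=
  f 0 < x ∧ x < y ∧ y ≤ f n ∧ ∀ t, x ≤ t → t < y → ∀ s ≤ n, f s ≠ t

lemma codeg_coface (c t : ℕ) : codegN c (cofaceN c t) = t := by
  unfold codegN cofaceN; split_ifs <;> omega

lemma coface_ne (c t : ℕ) : cofaceN c t ≠ c := by
  unfold cofaceN; split_ifs <;> omega

lemma lemS (f g : ℕ → ℕ) (n c x y : ℕ) (hx : 1 ≤ x) (hg : ∀ s ≤ n, g s = cofaceN c (f s)) :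
    Jmp g n x y ↔
      Jmp f n (codegN c x) (codegN c y) ∨ (x = c ∧ y = c + 1 ∧ f 0 < c ∧ c ≤ f n) := by
  have hg0 := hg 0 (Nat.zero_le n)
  have hgn := hg n le_rfl
  unfold Jmp
  constructor
  · rintro ⟨h1, h2, h3, h4⟩
    rw [hg0] at h1; rw [hgn] at h3
    by_cases hD : x = c ∧ y = c + 1
    · right
      obtain ⟨hx1, hy1⟩ := hD
      subst hx1 hy1
      refine ⟨rfl, rfl, ?_, ?_⟩
      · unfold cofaceN at h1; split_ifs at h1 <;> omega
      · unfold cofaceN at h3; split_ifs at h3 <;> omega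
    · left
      refine ⟨?_, ?_, ?_, ?_⟩
      · unfold cofaceN at h1; unfold codegN; split_ifs at h1 ⊢ <;> omega
      · unfold codegN; split_ifs <;> omega
      · unfold cofaceN at h3; unfold codegN; split_ifs at h3 ⊢ <;> omega
      · intro t ht1 ht2 s hs hfs
        refine h4 (cofaceN c t) ?_ ?_ s hs ?_
        · unfold codegN at ht1 ht2; unfold cofaceN; split_ifs at ht1 ht2 ⊢ <;> omega
        · unfold codegN at ht1 ht2; unfold cofaceN; split_ifs at ht1 ht2 ⊢ <;> omega
        · rw [hg s hs, hfs]
  · rintro (⟨h1, h2, h3, h4⟩ | ⟨hxc, hyc, h1, h3⟩)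
    · refine ⟨?_, ?_, ?_, ?_⟩
      · rw [hg0]; unfold codegN at h1; unfold cofaceN; split_ifs at h1 ⊢ <;> omega
      · unfold codegN at h2; split_ifs at h2 <;> omega
      · rw [hgn]; unfold codegN at h3; unfold cofaceN; split_ifs at h3 ⊢ <;> omega
      · intro t ht1 ht2 s hs hgs
        rw [hg s hs] at hgs
        have hne : t ≠ c := by rw [← hgs]; exact coface_ne c (f s)
        refine h4 (codegN c t) ?_ ?_ s hs ?_
        · unfold codegN at *; unfold cofaceN at hgs; split_ifs at * <;> omega
        · unfold codegN at *; unfold cofaceN at hgs; split_ifs at * <;> omega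
        · unfold codegN at *; unfold cofaceN at hgs; split_ifs at * <;> omega
    · refine ⟨?_, by omega, ?_, ?_⟩
      · rw [hg0, hxc]; unfold cofaceN; split_ifs <;> omega
      · rw [hgn, hyc]; unfold cofaceN; split_ifs <;> omega
      · intro t ht1 ht2 s hs hgs
        rw [hg s hs] at hgs
        have ht : t = c := by omega
        rw [ht] at hgs
        exact coface_ne _ (f s) hgs
/-- The permutation part of well-formedness. -/
def PWf (n : ℕ) (Γ : PreTree) : Prop :=
  ∀ k, 1 ≤ k → k ≤ n →
    1 ≤ Γ.perm k ∧ Γ.perm k ≤ n ∧ Γ.inv (Γ.perm k) = k ∧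
    1 ≤ Γ.inv k ∧ Γ.inv k ≤ n ∧ Γ.perm (Γ.inv k) = k

lemma coface_lt {c a b : ℕ} (h : a < b) : cofaceN c a < cofaceN c b := by
  unfold cofaceN; split_ifs <;> omega

lemma coface_ge (c a : ℕ) : a ≤ cofaceN c a := by unfold cofaceN; split_ifs <;> omega

lemma coface_le (c a : ℕ) : cofaceN c a ≤ a + 1 := by unfold cofaceN; split_ifs <;> omega

lemma coface_codeg (c t : ℕ) (h : t ≠ c) : cofaceN c (codegN c t) = t := by
  unfold cofaceN codegN; split_ifs <;> omega

lemma inv_coface_zero (m ℓ : ℕ) (Γ : PreTree) (t : ℕ) :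
    (coface m ℓ 0 Γ).inv t = if t = 1 then 1 else Γ.inv (t - 1) + 1 := by
  simp [coface]

lemma inv_coface_top (m ℓ : ℕ) (Γ : PreTree) (t : ℕ) :
    (coface m ℓ (ℓ + 1) Γ).inv t = if t = ℓ + 1 then ℓ + 1 else Γ.inv t := by
  simp [coface]

lemma inv_coface_mid (m ℓ k : ℕ) (Γ : PreTree) (h1 : k ≠ 0) (h2 : k ≠ ℓ + 1) (t : ℕ) :
    (coface m ℓ k Γ).inv t =
      if t = k then Γ.inv k else cofaceN (Γ.inv k) (Γ.inv (codegN k t)) := by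
  simp [coface, h1, h2]

lemma perm_coface_zero (m ℓ : ℕ) (Γ : PreTree) (t : ℕ) :
    (coface m ℓ 0 Γ).perm t = if t = 1 then 1 else Γ.perm (t - 1) + 1 := by
  simp [coface]

lemma perm_coface_top (m ℓ : ℕ) (Γ : PreTree) (t : ℕ) :
    (coface m ℓ (ℓ + 1) Γ).perm t = if t = ℓ + 1 then ℓ + 1 else Γ.perm t := by
  simp [coface]

lemma perm_coface_mid (m ℓ k : ℕ) (Γ : PreTree) (h1 : k ≠ 0) (h2 : k ≠ ℓ + 1) (t : ℕ) :
    (coface m ℓ k Γ).perm t =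
      if t = Γ.inv k then k else cofaceN k (Γ.perm (codegN (Γ.inv k) t)) := by
  simp [coface, h1, h2]

lemma pwf_coface (m ℓ k : ℕ) (Γ : PreTree) (hk : k ≤ ℓ + 1) (hΓ : PWf ℓ Γ) :
    PWf (ℓ + 1) (coface m ℓ k Γ) := by
  by_cases h0 : k = 0
  · subst h0
    intro p hp1 hp2
    by_cases hp : p = 1
    · subst hp
      refine ⟨?_, ?_, ?_, ?_, ?_, ?_⟩ <;>
        · simp only [inv_coface_zero, perm_coface_zero]
          split_ifs <;> omega
    · obtain ⟨a1, a2, a3, a4, a5, a6⟩ := hΓ (p - 1) (by omega) (by omega)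
      have e1 : (coface m ℓ 0 Γ).perm p = Γ.perm (p - 1) + 1 := by
        rw [perm_coface_zero, if_neg hp]
      have e2 : (coface m ℓ 0 Γ).inv (Γ.perm (p - 1) + 1) = Γ.inv (Γ.perm (p - 1)) + 1 := by
        rw [inv_coface_zero, if_neg (by omega)]; simp
      have e3 : (coface m ℓ 0 Γ).inv p = Γ.inv (p - 1) + 1 := by
        rw [inv_coface_zero, if_neg hp]
      have e4 : (coface m ℓ 0 Γ).perm (Γ.inv (p - 1) + 1) = Γ.perm (Γ.inv (p - 1)) + 1 := by
        rw [perm_coface_zero, if_neg (by omega)]; simp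
      refine ⟨?_, ?_, ?_, ?_, ?_, ?_⟩
      · rw [e1]; omega
      · rw [e1]; omega
      · rw [e1, e2, a3]; omega
      · rw [e3]; omega
      · rw [e3]; omega
      · rw [e3, e4, a6]; omega
  · by_cases htop : k = ℓ + 1
    · subst htop
      intro p hp1 hp2
      by_cases hp : p = ℓ + 1
      · subst hp
        refine ⟨?_, ?_, ?_, ?_, ?_, ?_⟩ <;>
          · simp only [inv_coface_top, perm_coface_top]
            split_ifs <;> omega
      · obtain ⟨a1, a2, a3, a4, a5, a6⟩ := hΓ p hp1 (by omega)
        have e1 : (coface m ℓ (ℓ + 1) Γ).perm p = Γ.perm p := by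
          rw [perm_coface_top, if_neg hp]
        have e2 : (coface m ℓ (ℓ + 1) Γ).inv (Γ.perm p) = Γ.inv (Γ.perm p) := by
          rw [inv_coface_top, if_neg (by omega)]
        have e3 : (coface m ℓ (ℓ + 1) Γ).inv p = Γ.inv p := by
          rw [inv_coface_top, if_neg hp]
        have e4 : (coface m ℓ (ℓ + 1) Γ).perm (Γ.inv p) = Γ.perm (Γ.inv p) := by
          rw [perm_coface_top, if_neg (by omega)]
        exact ⟨by rw [e1]; omega, by rw [e1]; omega, by rw [e1, e2, a3],
          by rw [e3]; omega, by rw [e3]; omega, by rw [e3, e4, a6]⟩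
    · obtain ⟨b1, b2, b3, b4, b5, b6⟩ := hΓ k (by omega) (by omega)
      intro p hp1 hp2
      have hA : 1 ≤ (coface m ℓ k Γ).perm p ∧ (coface m ℓ k Γ).perm p ≤ ℓ + 1 ∧
          (coface m ℓ k Γ).inv ((coface m ℓ k Γ).perm p) = p := by
        by_cases hp : p = Γ.inv k
        · have e1 : (coface m ℓ k Γ).perm p = k := by
            rw [perm_coface_mid m ℓ k Γ h0 htop, if_pos hp]
          have e2 : (coface m ℓ k Γ).inv k = Γ.inv k := by
            rw [inv_coface_mid m ℓ k Γ h0 htop, if_pos rfl]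
          rw [e1, e2, hp]
          exact ⟨by omega, by omega, rfl⟩
        · have hq : 1 ≤ codegN (Γ.inv k) p ∧ codegN (Γ.inv k) p ≤ ℓ := by
            unfold codegN; split_ifs <;> omega
          obtain ⟨c1, c2, c3, c4, c5, c6⟩ := hΓ _ hq.1 hq.2
          have e1 : (coface m ℓ k Γ).perm p = cofaceN k (Γ.perm (codegN (Γ.inv k) p)) := by
            rw [perm_coface_mid m ℓ k Γ h0 htop, if_neg hp]
          have e2 : (coface m ℓ k Γ).inv (cofaceN k (Γ.perm (codegN (Γ.inv k) p))) =
              cofaceN (Γ.inv k) (codegN (Γ.inv k) p) := by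
            rw [inv_coface_mid m ℓ k Γ h0 htop, if_neg (coface_ne _ _), codeg_coface, c3]
          rw [e1, e2, coface_codeg _ _ hp]
          have := coface_ge k (Γ.perm (codegN (Γ.inv k) p))
          have := coface_le k (Γ.perm (codegN (Γ.inv k) p))
          exact ⟨by omega, by omega, rfl⟩
      have hB : 1 ≤ (coface m ℓ k Γ).inv p ∧ (coface m ℓ k Γ).inv p ≤ ℓ + 1 ∧
          (coface m ℓ k Γ).perm ((coface m ℓ k Γ).inv p) = p := by
        by_cases hp : p = k
        · have e1 : (coface m ℓ k Γ).inv p = Γ.inv k := by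
            rw [inv_coface_mid m ℓ k Γ h0 htop, if_pos hp]
          have e2 : (coface m ℓ k Γ).perm (Γ.inv k) = k := by
            rw [perm_coface_mid m ℓ k Γ h0 htop, if_pos rfl]
          rw [e1, e2, hp]
          exact ⟨by omega, by omega, rfl⟩
        · have hu : 1 ≤ codegN k p ∧ codegN k p ≤ ℓ := by
            unfold codegN; split_ifs <;> omega
          obtain ⟨d1, d2, d3, d4, d5, d6⟩ := hΓ _ hu.1 hu.2
          have e1 : (coface m ℓ k Γ).inv p = cofaceN (Γ.inv k) (Γ.inv (codegN k p)) := by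
            rw [inv_coface_mid m ℓ k Γ h0 htop, if_neg hp]
          have e2 : (coface m ℓ k Γ).perm (cofaceN (Γ.inv k) (Γ.inv (codegN k p))) =
              cofaceN k (codegN k p) := by
            rw [perm_coface_mid m ℓ k Γ h0 htop, if_neg (coface_ne _ _), codeg_coface, d6]
          rw [e1, e2, coface_codeg _ _ hp]
          have := coface_ge (Γ.inv k) (Γ.inv (codegN k p))
          have := coface_le (Γ.inv k) (Γ.inv (codegN k p))
          exact ⟨by omega, by omega, rfl⟩
      exact ⟨hA.1, hA.2.1, hA.2.2, hB.1, hB.2.1, hB.2.2⟩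
lemma stab (ℓ : ℕ) (Γ : PreTree) (ψ0 ψn k : ℕ) (P : PWf ℓ Γ)
    (I4 : ∀ t, 1 ≤ t → t ≤ ψ0 → Γ.inv t = t) (I5 : ∀ t, ψn < t → t ≤ ℓ → Γ.inv t = t)
    (hk1 : 1 ≤ k) (hk2 : k ≤ ℓ) :
    (k ≤ ψ0 ↔ Γ.inv k ≤ ψ0) ∧ (ψn < k ↔ ψn < Γ.inv k) := by
  obtain ⟨p1, p2, p3, p4, p5, p6⟩ := P k hk1 hk2
  refine ⟨⟨?_, ?_⟩, ⟨?_, ?_⟩⟩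
  · intro h; rw [I4 k hk1 h]; exact h
  · intro h
    have hj := I4 (Γ.inv k) p4 h
    obtain ⟨q1, q2, q3, q4, q5, q6⟩ := P (Γ.inv k) p4 p5
    rw [hj] at q6
    omega
  · intro h; rw [I5 k h hk2]; exact h
  · intro h
    have hj := I5 (Γ.inv k) h p5
    obtain ⟨q1, q2, q3, q4, q5, q6⟩ := P (Γ.inv k) p4 p5
    rw [hj] at q6
    omega

lemma key (m n ℓ : ℕ) (ψ : ℕ → ℕ) (Λ Γ : PreTree) (h : Transforms m n ℓ ψ Λ Γ) :
    Λ.Wf m n →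
    PWf ℓ Γ ∧ (∀ s t, s < t → t ≤ n → ψ s < ψ t) ∧ ψ n ≤ ℓ ∧
    twisted ψ Λ Γ n = ψ n ∧ (∀ t, 1 ≤ t → t ≤ ψ 0 → Γ.inv t = t) ∧
    (∀ t, ψ n < t → t ≤ ℓ → Γ.inv t = t) := by
  induction h with
  | refl Θ =>
    intro hΘ
    refine ⟨hΘ.1, fun s t hst _ => hst, le_rfl, ?_, ?_, ?_⟩
    · by_cases hn : n = 0
      · simp [twisted, hn]
      · simp only [twisted, if_neg hn]
        have := (hΘ.1 n (by omega) le_rfl).2.2.1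
        simpa using this
    · intro t ht1 ht2; simp only [id] at ht2; omega
    · intro t ht1 ht2; simp only [id] at ht1; omega
  | @step ℓ ψ Λ Γ k hk h ih =>
    intro hΛ
    obtain ⟨P, M, B, T, I4, I5⟩ := ih hΛ
    have Mle : ∀ s t, s ≤ t → t ≤ n → ψ s ≤ ψ t := by
      intro s t hst htn
      rcases Nat.eq_or_lt_of_le hst with he | hl
      · rw [he]
      · exact le_of_lt (M s t hl htn)
    have hψ0n : ψ 0 ≤ ψ n := Mle 0 n (Nat.zero_le n) le_rfl
    refine ⟨pwf_coface m ℓ k Γ hk P, fun s t hst htn => coface_lt (M s t hst htn), ?_, ?_, ?_, ?_⟩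
    · show cofaceN k (ψ n) ≤ ℓ + 1
      have := coface_le k (ψ n); omega
    · -- twisted ψ' Λ Γ' n = ψ' n
      by_cases hn : n = 0
      · simp [twisted, hn]
      · simp only [twisted, if_neg hn]
        have hr := hΛ.1 n (by omega) le_rfl
        have hT : Γ.inv (ψ (Λ.perm n)) = ψ n := by
          unfold twisted at T; rw [if_neg hn] at T; exact T
        have hv1 : 1 ≤ ψ (Λ.perm n) := by
          have := M 0 (Λ.perm n) (by omega) hr.2.1; omega
        have hvl : ψ (Λ.perm n) ≤ ℓ := le_trans (Mle (Λ.perm n) n hr.2.1 le_rfl) B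
        by_cases h0 : k = 0
        · subst h0
          rw [inv_coface_zero]
          have hc : cofaceN 0 (ψ (Λ.perm n)) = ψ (Λ.perm n) + 1 := by
            unfold cofaceN; split_ifs <;> omega
          rw [hc, if_neg (by omega)]
          simp only [Nat.add_sub_cancel]
          rw [hT]
          unfold cofaceN; split_ifs <;> omega
        · by_cases htop : k = ℓ + 1
          · subst htop
            rw [inv_coface_top]
            have hc : cofaceN (ℓ + 1) (ψ (Λ.perm n)) = ψ (Λ.perm n) := by
              unfold cofaceN; split_ifs <;> omega
            rw [hc, if_neg (by omega), hT]
            unfold cofaceN; split_ifs <;> omega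
          · have hst := stab ℓ Γ (ψ 0) (ψ n) k P I4 I5 (by omega) (by omega)
            rw [inv_coface_mid m ℓ k Γ h0 htop, if_neg (coface_ne _ _), codeg_coface, hT]
            rcases hst.2 with ⟨w1, w2⟩
            unfold cofaceN; split_ifs <;> omega
    · -- I4'
      intro t ht1 ht2
      replace ht2 : t ≤ cofaceN k (ψ 0) := ht2
      by_cases h0 : k = 0
      · subst h0
        rw [inv_coface_zero]
        have hc : cofaceN 0 (ψ 0) = ψ 0 + 1 := by unfold cofaceN; split_ifs <;> omega
        rw [hc] at ht2
        by_cases ht : t = 1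
        · rw [if_pos ht, ht]
        · rw [if_neg ht, I4 (t - 1) (by omega) (by omega)]; omega
      · by_cases htop : k = ℓ + 1
        · subst htop
          rw [inv_coface_top]
          have hc : cofaceN (ℓ + 1) (ψ 0) = ψ 0 := by unfold cofaceN; split_ifs <;> omega
          rw [hc] at ht2
          rw [if_neg (by omega), I4 t ht1 ht2]
        · have hk1 : 1 ≤ k := by omega
          have hk2 : k ≤ ℓ := by omega
          have hst := stab ℓ Γ (ψ 0) (ψ n) k P I4 I5 hk1 hk2
          rw [inv_coface_mid m ℓ k Γ h0 htop]
          by_cases hψk : ψ 0 < k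
          · have hc : cofaceN k (ψ 0) = ψ 0 := by unfold cofaceN; split_ifs <;> omega
            rw [hc] at ht2
            rw [if_neg (by omega)]
            have hcg : codegN k t = t := by unfold codegN; split_ifs <;> omega
            rw [hcg, I4 t ht1 ht2]
            have hj : ¬Γ.inv k ≤ ψ 0 := fun hcon => (by omega : ¬k ≤ ψ 0) (hst.1.mpr hcon)
            unfold cofaceN; split_ifs <;> omega
          · have hjk : Γ.inv k = k := I4 k hk1 (by omega)
            have hc : cofaceN k (ψ 0) = ψ 0 + 1 := by unfold cofaceN; split_ifs <;> omega
            rw [hc] at ht2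
            by_cases htk : t = k
            · rw [if_pos htk, hjk, htk]
            · rw [if_neg htk, hjk]
              by_cases hlt : t < k
              · have hcg : codegN k t = t := by unfold codegN; split_ifs <;> omega
                rw [hcg, I4 t ht1 (by omega)]
                unfold cofaceN; split_ifs <;> omega
              · have hcg : codegN k t = t - 1 := by unfold codegN; split_ifs <;> omega
                rw [hcg, I4 (t - 1) (by omega) (by omega)]
                unfold cofaceN; split_ifs <;> omega
    · -- I5'
      intro t ht1 ht2
      replace ht1 : cofaceN k (ψ n) < t := ht1
      by_cases h0 : k = 0
      · subst h0
        rw [inv_coface_zero]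
        have hc : cofaceN 0 (ψ n) = ψ n + 1 := by unfold cofaceN; split_ifs <;> omega
        rw [hc] at ht1
        rw [if_neg (by omega), I5 (t - 1) (by omega) (by omega)]; omega
      · by_cases htop : k = ℓ + 1
        · subst htop
          rw [inv_coface_top]
          have hc : cofaceN (ℓ + 1) (ψ n) = ψ n := by unfold cofaceN; split_ifs <;> omega
          rw [hc] at ht1
          by_cases ht : t = ℓ + 1
          · rw [if_pos ht, ht]
          · rw [if_neg ht, I5 t ht1 (by omega)]
        · have hk1 : 1 ≤ k := by omega
          have hk2 : k ≤ ℓ := by omega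
          have hst := stab ℓ Γ (ψ 0) (ψ n) k P I4 I5 hk1 hk2
          rw [inv_coface_mid m ℓ k Γ h0 htop]
          by_cases hψk : ψ n < k
          · have hjk : Γ.inv k = k := I5 k hψk hk2
            have hc : cofaceN k (ψ n) = ψ n := by unfold cofaceN; split_ifs <;> omega
            rw [hc] at ht1
            by_cases htk : t = k
            · rw [if_pos htk, hjk, htk]
            · rw [if_neg htk, hjk]
              by_cases hlt : t < k
              · have hcg : codegN k t = t := by unfold codegN; split_ifs <;> omega
                rw [hcg, I5 t ht1 (by omega)]
                unfold cofaceN; split_ifs <;> omega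
              · have hcg : codegN k t = t - 1 := by unfold codegN; split_ifs <;> omega
                rw [hcg, I5 (t - 1) (by omega) (by omega)]
                unfold cofaceN; split_ifs <;> omega
          · have hj : ¬ψ n < Γ.inv k := fun hcon => hψk (hst.2.mpr hcon)
            have hc : cofaceN k (ψ n) = ψ n + 1 := by unfold cofaceN; split_ifs <;> omega
            rw [hc] at ht1
            rw [if_neg (by omega)]
            have hcg : codegN k t = t - 1 := by unfold codegN; split_ifs <;> omega
            rw [hcg, I5 (t - 1) (by omega) (by omega)]
            unfold cofaceN; split_ifs <;> omega
lemma codeg_zero (x : ℕ) : codegN 0 x = x - 1 := by unfold codegN; split_ifs <;> omega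

lemma codeg_of_le {c x : ℕ} (h : x ≤ c) : codegN c x = x := by unfold codegN; split_ifs <;> omega

lemma codeg_le (c x : ℕ) : codegN c x ≤ x := by unfold codegN; split_ifs <;> omega

lemma main (m n ℓ : ℕ) (ψ : ℕ → ℕ) (Λ Γ : PreTree) (h : Transforms m n ℓ ψ Λ Γ) :
    Λ.Wf m n → ∀ α β, 1 ≤ α → α ≤ ℓ → 1 ≤ β → β ≤ ℓ →
    (Jmp ψ n α β ↔ Jmp (twisted ψ Λ Γ) n (Γ.inv α) (Γ.inv β)) := by
  induction h with
  | refl Θ =>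
    intro hΘ α β hα hα' hβ hβ'
    constructor
    · rintro ⟨h1, h2, h3, h4⟩
      exact absurd rfl (h4 α le_rfl h2 α hα')
    · rintro ⟨h1, h2, h3, h4⟩
      have ha := hΘ.1 α hα hα'
      refine absurd ?_ (h4 (Θ.inv α) le_rfl h2 (Θ.inv α) ha.2.2.2.2.1)
      have hne : ¬Θ.inv α = 0 := by omega
      simp only [twisted, if_neg hne, id]
      rw [ha.2.2.2.2.2]
  | @step ℓ ψ Λ Γ k hk h ih =>
    intro hΛ α β hα hα' hβ hβ'
    obtain ⟨P, M, B, T, I4, I5⟩ := key m n ℓ ψ Λ Γ h hΛ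
    have hstep : Transforms m n (ℓ + 1) (fun t => cofaceN k (ψ t)) Λ (coface m ℓ k Γ) :=
      Transforms.step k hk h
    obtain ⟨P', M', B', T', I4', I5'⟩ := key m n (ℓ + 1) _ Λ _ hstep hΛ
    have ihΛ := ih hΛ
    have Mle : ∀ s t, s ≤ t → t ≤ n → ψ s ≤ ψ t := by
      intro s t hst htn
      rcases Nat.eq_or_lt_of_le hst with he | hl
      · rw [he]
      · exact le_of_lt (M s t hl htn)
    have hψ0n : ψ 0 ≤ ψ n := Mle 0 n (Nat.zero_le n) le_rfl
    have htw0 : twisted ψ Λ Γ 0 = ψ 0 := by simp [twisted]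
    have hv : ∀ s, 1 ≤ s → s ≤ n → 1 ≤ ψ (Λ.perm s) ∧ ψ (Λ.perm s) ≤ ℓ := by
      intro s hs1 hs2
      have hr := hΛ.1 s hs1 hs2
      constructor
      · have := M 0 (Λ.perm s) (by omega) hr.2.1; omega
      · exact le_trans (Mle (Λ.perm s) n hr.2.1 le_rfl) B
    have ha'1 : 1 ≤ (coface m ℓ k Γ).inv α := (P' α hα hα').2.2.2.1
    have hb'1 : 1 ≤ (coface m ℓ k Γ).inv β := (P' β hβ hβ').2.2.2.1
    have hb'2 : (coface m ℓ k Γ).inv β ≤ ℓ + 1 := (P' β hβ hβ').2.2.2.2.1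
    by_cases h0 : k = 0
    · subst h0
      have htw : ∀ s ≤ n, twisted (fun t => cofaceN 0 (ψ t)) Λ (coface m ℓ 0 Γ) s =
          cofaceN 0 (twisted ψ Λ Γ s) := by
        intro s hs
        by_cases hs0 : s = 0
        · subst hs0; simp [twisted]
        · simp only [twisted, if_neg hs0]
          have hvs := hv s (by omega) hs
          rw [inv_coface_zero]
          have e1 : cofaceN 0 (ψ (Λ.perm s)) = ψ (Λ.perm s) + 1 := by
            unfold cofaceN; split_ifs <;> omega
          rw [e1, if_neg (by omega)]
          simp only [Nat.add_sub_cancel]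
          unfold cofaceN; split_ifs <;> omega
      rw [lemS ψ (fun t => cofaceN 0 (ψ t)) n 0 α β hα (fun s _ => rfl),
        lemS (twisted ψ Λ Γ) (twisted (fun t => cofaceN 0 (ψ t)) Λ (coface m ℓ 0 Γ)) n 0
          ((coface m ℓ 0 Γ).inv α) ((coface m ℓ 0 Γ).inv β) ha'1 htw]
      simp only [codeg_zero]
      by_cases hsm : α = 1 ∨ β = 1
      · have hA1 : (coface m ℓ 0 Γ).inv 1 = 1 := by rw [inv_coface_zero]; simp
        apply iff_of_false
        · rintro (hJ | hD)
          · rcases hsm with h1 | h1 <;> subst h1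
            · have := hJ.1; omega
            · have := hJ.2.1; omega
          · omega
        · rintro (hJ | hD)
          · rcases hsm with h1 | h1 <;> subst h1
            · rw [hA1] at hJ
              have := hJ.1; rw [htw0] at this; omega
            · rw [hA1] at hJ
              have h2 := hJ.2.1
              omega
          · omega
      · push_neg at hsm
        have ea : (coface m ℓ 0 Γ).inv α = Γ.inv (α - 1) + 1 := by
          rw [inv_coface_zero, if_neg hsm.1]
        have eb : (coface m ℓ 0 Γ).inv β = Γ.inv (β - 1) + 1 := by
          rw [inv_coface_zero, if_neg hsm.2]
        rw [ea, eb]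
        simp only [Nat.add_sub_cancel]
        have hiff := ihΛ (α - 1) (β - 1) (by omega) (by omega) (by omega) (by omega)
        constructor
        · rintro (hJ | hD)
          · exact Or.inl (hiff.mp hJ)
          · exact absurd hD.1 (by omega)
        · rintro (hJ | hD)
          · exact Or.inl (hiff.mpr hJ)
          · exact absurd hD.1 (by omega)
    · by_cases htop : k = ℓ + 1
      · subst htop
        have htw : ∀ s ≤ n, twisted (fun t => cofaceN (ℓ + 1) (ψ t)) Λ (coface m ℓ (ℓ + 1) Γ) s =
            cofaceN (ℓ + 1) (twisted ψ Λ Γ s) := by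
          intro s hs
          by_cases hs0 : s = 0
          · subst hs0; simp [twisted]
          · simp only [twisted, if_neg hs0]
            have hvs := hv s (by omega) hs
            have e1 : cofaceN (ℓ + 1) (ψ (Λ.perm s)) = ψ (Λ.perm s) := by
              unfold cofaceN; split_ifs <;> omega
            rw [e1, inv_coface_top, if_neg (by omega)]
            have hgb := (P (ψ (Λ.perm s)) hvs.1 hvs.2).2.2.2.2.1
            unfold cofaceN; split_ifs <;> omega
        rw [lemS ψ (fun t => cofaceN (ℓ + 1) (ψ t)) n (ℓ + 1) α β hα (fun s _ => rfl),
          lemS (twisted ψ Λ Γ) (twisted (fun t => cofaceN (ℓ + 1) (ψ t)) Λ (coface m ℓ (ℓ + 1) Γ)) n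
            (ℓ + 1) ((coface m ℓ (ℓ + 1) Γ).inv α) ((coface m ℓ (ℓ + 1) Γ).inv β) ha'1 htw]
        rw [codeg_of_le hα', codeg_of_le hβ']
        have eAtop : (coface m ℓ (ℓ + 1) Γ).inv (ℓ + 1) = ℓ + 1 := by
          rw [inv_coface_top, if_pos rfl]
        by_cases hbig : α = ℓ + 1 ∨ β = ℓ + 1
        · apply iff_of_false
          · rintro (hJ | hD)
            · have h2 := hJ.2.1
              have h3 := hJ.2.2.1
              omega
            · omega
          · rintro (hJ | hD)
            · have h2 := hJ.2.1
              have h3 := hJ.2.2.1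
              rw [T] at h3
              rcases hbig with h1 | h1 <;> subst h1
              · rw [eAtop, codeg_of_le le_rfl] at h2
                have := codeg_le (ℓ + 1) ((coface m ℓ (ℓ + 1) Γ).inv β)
                omega
              · rw [eAtop, codeg_of_le le_rfl] at h3
                omega
            · rw [T] at hD
              have := hD.2.2.2
              omega
        · push_neg at hbig
          have ea : (coface m ℓ (ℓ + 1) Γ).inv α = Γ.inv α := by
            rw [inv_coface_top, if_neg hbig.1]
          have eb : (coface m ℓ (ℓ + 1) Γ).inv β = Γ.inv β := by
            rw [inv_coface_top, if_neg hbig.2]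
          have hal : α ≤ ℓ := by omega
          have hbl : β ≤ ℓ := by omega
          rw [ea, eb, codeg_of_le (le_trans (P α hα hal).2.2.2.2.1 (by omega)),
            codeg_of_le (le_trans (P β hβ hbl).2.2.2.2.1 (by omega))]
          have hiff := ihΛ α β hα hal hβ hbl
          constructor
          · rintro (hJ | hD)
            · exact Or.inl (hiff.mp hJ)
            · exact absurd hD.2.2.2 (by omega)
          · rintro (hJ | hD)
            · exact Or.inl (hiff.mpr hJ)
            · rw [T] at hD
              exact absurd hD.2.2.2 (by omega)
      · -- internal case: 1 ≤ k ≤ ℓ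
        have hk1 : 1 ≤ k := by omega
        have hk2 : k ≤ ℓ := by omega
        have hjP := P k hk1 hk2
        have hst := stab ℓ Γ (ψ 0) (ψ n) k P I4 I5 hk1 hk2
        obtain ⟨u1, u2⟩ := hst.1
        obtain ⟨w1, w2⟩ := hst.2
        have htw : ∀ s ≤ n, twisted (fun t => cofaceN k (ψ t)) Λ (coface m ℓ k Γ) s =
            cofaceN (Γ.inv k) (twisted ψ Λ Γ s) := by
          intro s hs
          by_cases hs0 : s = 0
          · subst hs0
            simp only [twisted, if_pos rfl]
            unfold cofaceN; split_ifs <;> omega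
          · simp only [twisted, if_neg hs0]
            rw [inv_coface_mid m ℓ k Γ h0 htop, if_neg (coface_ne _ _), codeg_coface]
        rw [lemS ψ (fun t => cofaceN k (ψ t)) n k α β hα (fun s _ => rfl),
          lemS (twisted ψ Λ Γ) (twisted (fun t => cofaceN k (ψ t)) Λ (coface m ℓ k Γ)) n
            (Γ.inv k) ((coface m ℓ k Γ).inv α) ((coface m ℓ k Γ).inv β) ha'1 htw]
        have m1 : ∀ γ, codegN (Γ.inv k) ((coface m ℓ k Γ).inv γ) = Γ.inv (codegN k γ) := by
          intro γ
          by_cases hγ : γ = k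
          · rw [hγ, inv_coface_mid m ℓ k Γ h0 htop, if_pos rfl, codeg_of_le le_rfl,
              codeg_of_le le_rfl]
          · rw [inv_coface_mid m ℓ k Γ h0 htop, if_neg hγ, codeg_coface]
        rw [m1 α, m1 β]
        have hcb : ∀ γ, 1 ≤ γ → γ ≤ ℓ + 1 → 1 ≤ codegN k γ ∧ codegN k γ ≤ ℓ := by
          intro γ hγ1 hγ2; unfold codegN; split_ifs <;> omega
        have hiff := ihΛ (codegN k α) (codegN k β) (hcb α hα hα').1 (hcb α hα hα').2
          (hcb β hβ hβ').1 (hcb β hβ hβ').2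
        have hDD : (α = k ∧ β = k + 1 ∧ ψ 0 < k ∧ k ≤ ψ n) ↔
            ((coface m ℓ k Γ).inv α = Γ.inv k ∧ (coface m ℓ k Γ).inv β = Γ.inv k + 1 ∧
              twisted ψ Λ Γ 0 < Γ.inv k ∧ Γ.inv k ≤ twisted ψ Λ Γ n) := by
          constructor
          · rintro ⟨hA, hB, h3, h4⟩
            refine ⟨?_, ?_, ?_, ?_⟩
            · rw [hA, inv_coface_mid m ℓ k Γ h0 htop, if_pos rfl]
            · rw [hB, inv_coface_mid m ℓ k Γ h0 htop, if_neg (by omega)]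
              have e1 : codegN k (k + 1) = k := by unfold codegN; split_ifs <;> omega
              rw [e1]
              unfold cofaceN; split_ifs <;> omega
            · rw [htw0]; omega
            · rw [T]; omega
          · rintro ⟨e1, e2, e3, e4⟩
            rw [htw0] at e3
            rw [T] at e4
            have hA : α = k := by
              by_contra hak
              rw [inv_coface_mid m ℓ k Γ h0 htop, if_neg hak] at e1
              exact coface_ne _ _ e1
            have hB : β = k + 1 := by
              by_cases hbk : β = k
              · rw [hbk, inv_coface_mid m ℓ k Γ h0 htop, if_pos rfl] at e2
                omega
              · rw [inv_coface_mid m ℓ k Γ h0 htop, if_neg hbk] at e2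
                have hz : Γ.inv (codegN k β) = Γ.inv k := by
                  revert e2; unfold cofaceN; split_ifs <;> omega
                have hcbb := hcb β hβ hβ'
                have h7 := (P (codegN k β) hcbb.1 hcbb.2).2.2.2.2.2
                rw [hz, hjP.2.2.2.2.2] at h7
                unfold codegN at h7; split_ifs at h7 <;> omega
            exact ⟨hA, hB, by omega, by omega⟩
        exact or_congr hiff hDD

/-- Correspondence of jumps under twisting: with `a = (σ^{ψΛ})⁻¹(α)` and
`b = (σ^{ψΛ})⁻¹(β)`, the pair `(α,β)` is a jump interval for `ψ` iff `(a,b)` is a jump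
interval for the twisted morphism `ψ^Λ`. -/
theorem twisted_jump_correspondence (m n ℓ : ℕ) (ψ : ℕ → ℕ) (Λ Γ : PreTree)
    (hΛ : Λ.Wf m n) (h : Transforms m n ℓ ψ Λ Γ)
    (α β : ℕ) (hα : 1 ≤ α) (hα' : α ≤ ℓ) (hβ : 1 ≤ β) (hβ' : β ≤ ℓ) :
    (ψ 0 < α ∧ α < β ∧ β ≤ ψ n ∧ ∀ k, α ≤ k → k < β → ∀ y ≤ n, ψ y ≠ k) ↔
    (twisted ψ Λ Γ 0 < Γ.inv α ∧ Γ.inv α < Γ.inv β ∧ Γ.inv β ≤ twisted ψ Λ Γ n ∧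
      ∀ k, Γ.inv α ≤ k → k < Γ.inv β → ∀ s ≤ n, twisted ψ Λ Γ s ≠ k) := by
  exact main m n ℓ ψ Λ Γ h hΛ α β hα hα' hβ hβ'
end

section
/- Sign lemma: let Γ be a Fox-Neuwirth tree with ℓ leaves and permutation σ, and let d_u(Γ) be its coface transform for u ∈ [ℓ+1]. For all 1 ≤ i < j ≤ ℓ+1: if (i,j) is u-exceptional then sgn_{ij}^{d_uΓ} = +1, and otherwise sgn_{ij}^{d_uΓ} = sgn_{s_u(i), s_u(j)}^{Γ}. -/
/-- The sign tensor of a Fox–Neuwirth tree: `+1` if `i` appears before `j` in the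
linear order of the tree, `−1` otherwise. -/
def sgnFN (Γ : PreTree) (i j : ℕ) : ℤ :=
  if Γ.inv i < Γ.inv j then 1 else -1

/-- Sign lemma: for `1 ≤ i < j ≤ ℓ+1`, if `(i,j)` is `u`-exceptional then
`sgn_{ij}^{d_uΓ} = +1`, and otherwise `sgn_{ij}^{d_uΓ} = sgn_{s_u(i),s_u(j)}^Γ`. -/
theorem sgn_coface (m ℓ u : ℕ) (hu : u ≤ ℓ + 1) (Γ : PreTree) (hΓ : Γ.Wf m ℓ)
    (i j : ℕ) (hi : 1 ≤ i) (hij : i < j) (hj : j ≤ ℓ + 1) :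
    (IsExceptional ℓ u i j → sgnFN (coface m ℓ u Γ) i j = 1) ∧
    (¬ IsExceptional ℓ u i j →
      sgnFN (coface m ℓ u Γ) i j = sgnFN Γ (codegN u i) (codegN u j)) := by
  obtain ⟨hperm, -⟩ := hΓ
  have hinj : ∀ a b, 1 ≤ a → a ≤ ℓ → 1 ≤ b → b ≤ ℓ → Γ.inv a = Γ.inv b → a = b := by
    intro a b ha1 ha2 hb1 hb2 h
    have h1 := (hperm a ha1 ha2).2.2.2.2.2
    have h2 := (hperm b hb1 hb2).2.2.2.2.2
    rw [← h1, ← h2, h]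
  by_cases hu0 : u = 0
  · -- u = 0
    subst hu0
    have hexc : IsExceptional ℓ 0 i j ↔ i = 1 := by unfold IsExceptional; omega
    rw [hexc]
    constructor
    · intro h1
      subst h1
      have hjb := (hperm (j - 1) (by omega) (by omega)).2.2.2.1
      simp [coface, sgnFN, codegN]
      split_ifs <;> omega
    · intro hne
      simp [coface, sgnFN, codegN]
      split_ifs <;> omega
  · by_cases hul : u = ℓ + 1
    · -- u = ℓ + 1
      subst hul
      have hexc : IsExceptional ℓ (ℓ + 1) i j ↔ j = ℓ + 1 := by unfold IsExceptional; omega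
      rw [hexc]
      constructor
      · intro h1
        subst h1
        have hib := (hperm i hi (by omega)).2.2.2.2.1
        simp [coface, sgnFN, codegN]
        split_ifs <;> omega
      · intro hne
        simp [coface, sgnFN, codegN]
        split_ifs <;> omega
    · -- internal: 0 < u < ℓ + 1
      have hu1 : 1 ≤ u := by omega
      have huℓ : u ≤ ℓ := by omega
      have hα1 := (hperm u hu1 huℓ).2.2.2.1
      have hα2 := (hperm u hu1 huℓ).2.2.2.2.1
      have hexc : IsExceptional ℓ u i j ↔ (i = u ∧ j = u + 1) := by
        unfold IsExceptional; omega
      rw [hexc]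
      have hF : ∀ t, 1 ≤ t → t ≤ ℓ → t ≠ u → Γ.inv t ≠ Γ.inv u := by
        intro t h1 h2 h3 h
        exact h3 (hinj t u h1 h2 hu1 huℓ h)
      constructor
      · rintro ⟨h1, h2⟩
        subst h1; subst h2
        have hc : codegN i (i + 1) = i := by unfold codegN; split <;> omega
        simp [coface, hu0, hul, sgnFN, hc, cofaceN]
        all_goals split_ifs <;> omega
      · intro hne
        by_cases hiu : i = u
        · -- i = u, j ≠ u + 1, so j ≥ u + 2
          subst hiu
          have hj2 : i + 2 ≤ j := by
            rcases Nat.lt_or_ge j (i + 2) with h | h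
            · exact absurd ⟨rfl, by omega⟩ hne
            · exact h
          have hcj : codegN i j = j - 1 := by unfold codegN; split <;> omega
          have hci : codegN i i = i := by unfold codegN; split <;> omega
          have hB := hF (j - 1) (by omega) (by omega) (by omega)
          simp [coface, hu0, hul, sgnFN, hcj, hci, cofaceN, show ¬ j = i from by omega]
          split_ifs <;> omega
        · by_cases hju : j = u
          · -- j = u, i < u
            subst hju
            have hci : codegN j i = i := by unfold codegN; split <;> omega
            have hcj : codegN j j = j := by unfold codegN; split <;> omega
            have hB := hF i hi (by omega) hiu
            simp [coface, hu0, hul, sgnFN, hci, hcj, cofaceN, hiu]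
            split_ifs <;> omega
          · -- i ≠ u, j ≠ u : strict monotonicity of cofaceN (Γ.inv u)
            simp only [coface, if_neg hu0, if_neg hul, sgnFN, cofaceN]
            rw [if_neg hiu, if_neg hju]
            split_ifs <;> omega
end

section
/- The nerve of an acyclic category is a non-singular simplicial set: if C is a category in which every endomorphism is an identity and every isomorphism is an identity (e.g., a poset), then for every non-degenerate n-simplex x of the nerve N(C), the associated simplicial map Δⁿ → N(C) is injective in every degree. -/
open CategoryTheory Simplicial

/-- A simplex `x ∈ X_n` is non-degenerate: it is not in the image of `X(g)` for any
map `g : [n] → [k]` with `k < n` (equivalently, it is not a degeneracy). -/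
def SSet.Nondeg (X : SSet) {n : ℕ} (x : X _⦋n⦌) : Prop :=
  ∀ (k : ℕ), k < n → ∀ (g : (⦋n⦌ : SimplexCategory) ⟶ ⦋k⦌) (y : X _⦋k⦌),
    X.map g.op y ≠ x

/-!
When every endomorphism is an identity, any arrow between equal objects is an `eqToHom`, so a
simplex `x` of the nerve whose vertices `i` and `i + 1` coincide equals `σᵢ (d_{i+1} x)` and is
degenerate. Acyclicity turns two equal vertices `a < b` into equal consecutive vertices
`a ≤ a + 1` (through `a → a + 1 → b = a`), so a nondegenerate simplex has injective vertex map;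
as a map `Δᵏ → Δⁿ` is determined by its vertices, the characteristic map is then injective.
-/

lemma SSet.nondeg_iff_mem_nonDegenerate (X : SSet) {n : ℕ} (x : X _⦋n⦌) :
    X.Nondeg x ↔ x ∈ X.nonDegenerate n := by
  simp [SSet.Nondeg, SSet.nonDegenerate, SSet.degenerate]

namespace CategoryTheory

variable {C : Type*} [Category C]

lemma eq_eqToHom_of_forall_endo_eq_id (hendo : ∀ (x : C) (f : x ⟶ x), f = 𝟙 x)
    {x y : C} (f : x ⟶ y) (h : x = y) : f = eqToHom h := by
  subst h
  exact hendo x f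

lemma Functor.comp_eq_self_of_le (hendo : ∀ (x : C) (f : x ⟶ x), f = 𝟙 x)
    {P : Type*} [Preorder P] (F : P ⥤ C) (e : P →o P) (he : ∀ p, e p ≤ p)
    (hobj : ∀ p, F.obj (e p) = F.obj p) : e.monotone.functor ⋙ F = F := by
  have hmap (p : P) : F.map (homOfLE (he p)) = eqToHom (hobj p) :=
    eq_eqToHom_of_forall_endo_eq_id hendo _ _
  refine Functor.ext hobj fun p q f => ?_
  have hsq : homOfLE (e.monotone f.le) ≫ homOfLE (he q) = homOfLE (he p) ≫ f :=
    Subsingleton.elim _ _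
  have hFsq := congrArg F.map hsq
  rw [F.map_comp, F.map_comp, hmap, hmap] at hFsq
  change F.map (homOfLE (e.monotone f.le)) = eqToHom (hobj p) ≫ F.map f ≫ eqToHom (hobj q).symm
  rw [← Category.assoc, ← hFsq]
  simp

namespace nerve

lemma mem_range_σ_of_obj_eq (hendo : ∀ (x : C) (f : x ⟶ x), f = 𝟙 x) {m : ℕ}
    (x : (nerve C) _⦋m + 1⦌) (i : Fin (m + 1)) (h : x.obj i.castSucc = x.obj i.succ) :
    x ∈ Set.range ((nerve C).σ i) := by
  refine ⟨(nerve C).δ i.succ x, Functor.comp_eq_self_of_le hendo x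
    (SimplexCategory.σ i ≫ SimplexCategory.δ i.succ).toOrderHom (fun j => ?_) (fun j => ?_)⟩
  · change i.succ.succAbove (i.predAbove j) ≤ j
    by_cases hj : j = i.succ
    · simpa [hj] using Fin.castSucc_le_succ i
    · rw [Fin.succ_succAbove_predAbove hj]
  · change x.obj (i.succ.succAbove (i.predAbove j)) = x.obj j
    by_cases hj : j = i.succ
    · simpa [hj] using h
    · rw [Fin.succ_succAbove_predAbove hj]

lemma injective_obj_of_mem_nonDegenerate (hendo : ∀ (x : C) (f : x ⟶ x), f = 𝟙 x)
    (hacyclic : ∀ ⦃x y : C⦄, (x ⟶ y) → (y ⟶ x) → x = y)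
    {n : ℕ} (x : (nerve C) _⦋n⦌) (hx : x ∈ (nerve C).nonDegenerate n) :
    Function.Injective x.obj := by
  refine .of_lt_imp_ne fun a b hab hobj => hx ?_
  obtain _ | m := n
  · exact absurd hab (Subsingleton.elim (α := Fin 1) a b ▸ lt_irrefl a)
  set i : Fin (m + 1) := a.castPred (Fin.ne_last_of_lt hab)
  have hib : i.succ ≤ b := Fin.castSucc_lt_iff_succ_le.mp hab
  have h : x.obj i.castSucc = x.obj i.succ :=
    hacyclic (x.map (homOfLE (Fin.castSucc_le_succ i))) (x.map (homOfLE hib) ≫ eqToHom hobj.symm)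
  obtain ⟨y, hy⟩ := mem_range_σ_of_obj_eq hendo x i h
  exact hy ▸ SSet.σ_mem_degenerate _ i y

lemma nonsingular_of_acyclic (hendo : ∀ (x : C) (f : x ⟶ x), f = 𝟙 x)
    (hacyclic : ∀ ⦃x y : C⦄, (x ⟶ y) → (y ⟶ x) → x = y) : (nerve C).Nonsingular where
  mono := by
    intro n ⟨x, hx⟩
    simp only [NatTrans.mono_iff_mono_app, mono_iff_injective]
    intro ⟨⟨k⟩⟩ i j hij
    ext l : 1
    exact injective_obj_of_mem_nonDegenerate hendo hacyclic x hx (Functor.congr_obj hij l)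

end nerve
end CategoryTheory

/-- The nerve of an acyclic category is non-singular: for every non-degenerate
`n`-simplex `x` of `N(C)`, the characteristic map `Δⁿ → N(C)` is injective in every
degree, i.e. `g ↦ N(C)(g)(x)` is injective on `Hom([k],[n])` for all `k`. -/
theorem nerve_acyclic_nonSingular (C : Type*) [Category C]
    (hendo : ∀ (x : C) (f : x ⟶ x), f = 𝟙 x)
    (hacyclic : ∀ ⦃x y : C⦄, (x ⟶ y) → (y ⟶ x) → x = y)
    (n : ℕ) (x : (nerve C) _⦋n⦌) (hx : SSet.Nondeg (nerve C) x) :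
    ∀ (k : ℕ) (g₁ g₂ : (⦋k⦌ : SimplexCategory) ⟶ ⦋n⦌),
      (nerve C).map g₁.op x = (nerve C).map g₂.op x → g₁ = g₂ := by
  have := nerve.nonsingular_of_acyclic hendo hacyclic
  intro k g₁ g₂ h
  exact SSet.Nonsingular.injective_map x ((SSet.nondeg_iff_mem_nonDegenerate _ x).mp hx) h
end

section
/- Faces of non-degenerate simplices in a non-singular simplicial set are non-degenerate: if X is a non-singular simplicial set and x ∈ X_n is non-degenerate, then ∂_i x is non-degenerate for every i ∈ {0,…,n}. Consequently, the non-degenerate simplices of X form a semisimplicial set X^{nd}. -/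
open CategoryTheory Simplicial

/-- A simplicial set is non-singular if the characteristic map `Δⁿ → X` of every
non-degenerate `n`-simplex is injective in every degree. -/
def SSet.NonSingular (X : SSet) : Prop :=
  ∀ (n : ℕ) (x : X _⦋n⦌), SSet.Nondeg X x →
    ∀ (k : ℕ) (g₁ g₂ : (⦋k⦌ : SimplexCategory) ⟶ ⦋n⦌),
      X.map g₁.op x = X.map g₂.op x → g₁ = g₂

/-!
A non-singular `X` is an instance of Mathlib's `SSet.Nonsingular`: for non-degenerate `x`, the
map `Δ[n + 1] ⟶ X` classifying `x` is a monomorphism. The face `∂ᵢ x` is the image under it of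
the non-degenerate simplex `δ i` of `Δ[n + 1]`, and monomorphisms preserve non-degeneracy
(`SSet.nonDegenerate_δ`).
-/

namespace SSet

lemma nondeg_iff_mem_nonDegenerate_s17 (X : SSet) {n : ℕ} (x : X _⦋n⦌) :
    X.Nondeg x ↔ x ∈ X.nonDegenerate n := by
  simp [Nondeg, nonDegenerate, degenerate]

lemma NonSingular.nonsingular {X : SSet} (hX : X.NonSingular) : X.Nonsingular where
  mono := by
    rintro n ⟨x, hx⟩
    rw [NatTrans.mono_iff_mono_app]
    rintro ⟨⟨k⟩⟩
    rw [mono_iff_injective]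
    intro a b hab
    exact stdSimplex.objEquiv.injective
      (hX n x ((nondeg_iff_mem_nonDegenerate_s17 X x).2 hx) k _ _ hab)

end SSet

/-- In a non-singular simplicial set, every face of a non-degenerate simplex is
non-degenerate (hence the non-degenerate simplices form a semisimplicial set). -/
theorem face_nondeg_of_nonSingular (X : SSet) (hX : SSet.NonSingular X)
    (n : ℕ) (x : X _⦋n + 1⦌) (hx : SSet.Nondeg X x) (i : Fin (n + 2)) :
    SSet.Nondeg X (X.map (SimplexCategory.δ i).op x) := by
  have := hX.nonsingular
  rw [SSet.nondeg_iff_mem_nonDegenerate_s17] at hx ⊢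
  exact SSet.nonDegenerate_δ hx i
end
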